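/- arXiv:2301.13392 — 9 statements merged into one kernel-verified Lean document; each statement's English description precedes it below -/
import Mathlib

section
/- Let d be a positive integer and t ≥ 1 an integer. Let f : ℝ → ℝ be differentiable with f′(x) > 0 for every x ∈ ℝ, with f(x) → +∞ as x → +∞ and f(x) → −∞ as x → −∞. Let v₁, …, v_t ∈ ℝ^d be vectors all of whose entries lie in {0,1}, and let x₁, …, x_t ∈ {0,1}. Then there exists θ ∈ ℝ^d such that ∑_{i=1}^t (x_i − f(⟨v_i, θ⟩)) · v_i = 0 (the zero vector of ℝ^d), where ⟨·,·⟩ denotes the standard inner product. -/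
/-!
The equation says that the gradient of `Φ θ = ∑ i, (F ⟨v i, θ⟩ - x i * ⟨v i, θ⟩)` vanishes, where
`F` is a primitive of `f`. As `f` is monotone, `F` lies above its tangent lines, and as `f` is onto,
it has tangents of slopes `b + 1` and `b - 1`; hence `F y - b * y ≥ |y| - c` for every `b`. So
`u ↦ ∑ i, (F (u i) - x i * u i)` is coercive on `ℝᵗ` and attains its minimum on the closed
subspace `{(⟨v i, θ⟩)ᵢ}`; at a minimizing `θ` every partial derivative of `Φ` is zero.
-/

open Set Filter Matrix

theorem hasDerivAt_integral_sub_mul {f : ℝ → ℝ} (hf : Continuous f) (b y : ℝ) :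
    HasDerivAt (fun y => (∫ s in (0 : ℝ)..y, f s) - b * y) (f y - b) y :=
  (hf.integral_hasStrictDerivAt 0 y).hasDerivAt.sub (by simpa using (hasDerivAt_id y).const_mul b)

theorem isMinOn_integral_sub_mul {f : ℝ → ℝ} (hf : Continuous f) (hmono : Monotone f) (p : ℝ) :
    IsMinOn (fun y => (∫ s in (0 : ℝ)..y, f s) - f p * y) univ p := by
  have hderiv := hasDerivAt_integral_sub_mul hf (f p)
  have hconvex : ConvexOn ℝ univ (fun y => (∫ s in (0 : ℝ)..y, f s) - f p * y) := by
    refine Monotone.convexOn_univ_of_deriv (fun y => (hderiv y).differentiableAt) ?_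
    intro a b hab
    rw [(hderiv a).deriv, (hderiv b).deriv]
    exact sub_le_sub_right (hmono hab) _
  refine hconvex.isMinOn_of_rightDeriv_eq_zero (by simp) ?_
  rw [(hderiv p).hasDerivWithinAt.derivWithin (uniqueDiffWithinAt_Ioi p), sub_self]

theorem exists_abs_sub_le_integral_sub_mul {f : ℝ → ℝ} (hf : Continuous f) (hmono : Monotone f)
    (hsurj : Function.Surjective f) (b : ℝ) :
    ∃ c, ∀ y, |y| - c ≤ (∫ s in (0 : ℝ)..y, f s) - b * y := by
  set F : ℝ → ℝ := fun y => ∫ s in (0 : ℝ)..y, f s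
  obtain ⟨p, hp⟩ := hsurj (b + 1)
  obtain ⟨q, hq⟩ := hsurj (b - 1)
  refine ⟨max (p - (F p - b * p)) (-q - (F q - b * q)), fun y => ?_⟩
  have hp_le : F p - f p * p ≤ F y - f p * y := isMinOn_integral_sub_mul hf hmono p (mem_univ y)
  have hq_le : F q - f q * q ≤ F y - f q * y := isMinOn_integral_sub_mul hf hmono q (mem_univ y)
  rw [hp] at hp_le
  rw [hq] at hq_le
  rw [sub_le_iff_le_add, abs_le']
  constructor <;> linarith [le_max_left (p - (F p - b * p)) (-q - (F q - b * q)),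
    le_max_right (p - (F p - b * p)) (-q - (F q - b * q))]

theorem tendsto_sum_apply_cocompact_atTop {ι : Type*} [Fintype ι] {G : ι → ℝ → ℝ} {c : ι → ℝ}
    (hG : ∀ i y, |y| - c i ≤ G i y) :
    Tendsto (fun u : ι → ℝ => ∑ i, G i (u i)) (cocompact (ι → ℝ)) atTop := by
  refine tendsto_atTop_mono (fun u => ?_)
    (tendsto_atTop_add_const_right _ (-∑ i, c i) tendsto_norm_cocompact_atTop)
  have hnorm : ‖u‖ ≤ ∑ i, |u i| :=
    (pi_norm_le_iff_of_nonneg (by positivity)).2 fun i =>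
      Finset.single_le_sum (f := fun i => |u i|) (fun i _ => abs_nonneg _) (Finset.mem_univ i)
  calc ‖u‖ + -∑ i, c i ≤ ∑ i, (|u i| - c i) := by rw [Finset.sum_sub_distrib]; linarith
    _ ≤ ∑ i, G i (u i) := Finset.sum_le_sum fun i _ => hG i (u i)

theorem Matrix.vecMul_eq_zero_of_isMinOn {ι κ : Type*} [Fintype ι] [Fintype κ] [DecidableEq κ]
    (M : Matrix ι κ ℝ) {G g : ι → ℝ → ℝ} (hG : ∀ i y, HasDerivAt (G i) (g i y) y) {θ : κ → ℝ}
    (hmin : IsMinOn (fun θ => ∑ i, G i ((M *ᵥ θ) i)) univ θ) :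
    (fun i => g i ((M *ᵥ θ) i)) ᵥ* M = 0 := by
  funext j
  have hline : ∀ s : ℝ, M *ᵥ (θ + s • Pi.single j 1) = fun i => (M *ᵥ θ) i + s * M i j := by
    intro s
    ext i
    simp [mulVec_add, mulVec_smul]
  have hderiv : HasDerivAt (fun s : ℝ => ∑ i, G i ((M *ᵥ (θ + s • Pi.single j 1)) i))
      (((fun i => g i ((M *ᵥ θ) i)) ᵥ* M) j) 0 := by
    simp only [hline, vecMul, dotProduct]
    refine HasDerivAt.fun_sum fun i _ => ?_
    have := (hG i ((M *ᵥ θ) i + 0 * M i j)).comp (0 : ℝ)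
      (((hasDerivAt_id (0 : ℝ)).mul_const (M i j)).const_add ((M *ᵥ θ) i))
    simpa [Function.comp_def] using this
  have hlocal : IsLocalMin (fun s : ℝ => ∑ i, G i ((M *ᵥ (θ + s • Pi.single j 1)) i)) 0 :=
    Eventually.of_forall fun s => by simpa using hmin (mem_univ (θ + s • Pi.single j 1))
  exact hlocal.hasDerivAt_eq_zero hderiv

theorem LinearMap.exists_isMinOn_comp {E F : Type*} [AddCommGroup E] [Module ℝ E]
    [NormedAddCommGroup F] [NormedSpace ℝ F] [FiniteDimensional ℝ F] (L : E →ₗ[ℝ] F)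
    {H : F → ℝ} (hH : Continuous H) (hcoer : Tendsto H (cocompact F) atTop) :
    ∃ θ, IsMinOn (H ∘ L) univ θ := by
  obtain ⟨u, ⟨θ, rfl⟩, hmin⟩ := hH.continuousOn.exists_isMinOn'
    (LinearMap.range L).closed_of_finiteDimensional (LinearMap.range L).zero_mem
    ((hcoer.eventually_ge_atTop (H 0)).filter_mono inf_le_left)
  exact ⟨θ, fun θ' _ => hmin ⟨θ', rfl⟩⟩

theorem mle_equation_has_solution_general
    (d t : ℕ)
    (f : ℝ → ℝ) (hf : Differentiable ℝ f)
    (hf' : ∀ x : ℝ, 0 < deriv f x)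
    (htop : Filter.Tendsto f Filter.atTop Filter.atTop)
    (hbot : Filter.Tendsto f Filter.atBot Filter.atBot)
    (v : Fin t → Fin d → ℝ)
    (x : Fin t → ℝ) :
    ∃ θ : Fin d → ℝ,
      ∑ i : Fin t, (x i - f (∑ j : Fin d, v i j * θ j)) • v i = 0 := by
  have hfc : Continuous f := hf.continuous
  have hmono : Monotone f := (strictMono_of_deriv_pos hf').monotone
  have hG (i : Fin t) (y : ℝ) := hasDerivAt_integral_sub_mul hfc (x i) y
  choose c hc using fun i =>
    exists_abs_sub_le_integral_sub_mul hfc hmono (hfc.surjective htop hbot) (x i)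
  have hcont : Continuous fun u : Fin t → ℝ => ∑ i, ((∫ s in (0 : ℝ)..u i, f s) - x i * u i) :=
    continuous_finsetSum _ fun i _ =>
      (continuous_iff_continuousAt.2 fun y => (hG i y).continuousAt).comp (continuous_apply i)
  obtain ⟨θ, hθ⟩ :=
    (mulVecLin (of v)).exists_isMinOn_comp hcont (tendsto_sum_apply_cocompact_atTop hc)
  refine ⟨θ, ?_⟩
  have hstat := vecMul_eq_zero_of_isMinOn (of v) hG hθ
  rw [← neg_eq_zero, ← Finset.sum_neg_distrib, ← hstat, vecMul_eq_sum]
  refine Finset.sum_congr rfl fun i _ => ?_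
  rw [← neg_smul, neg_sub]
  rfl

/-- Existence of a solution to the maximum-likelihood estimating equation of
BGLM-Estimate: for binary feature vectors `v i` and binary observations `x i`,
and a differentiable, strictly increasing link function `f` with range ℝ,
there exists `θ` with `∑ i, (x i - f ⟨v i, θ⟩) • v i = 0`. -/
theorem mle_equation_has_solution
    (d t : ℕ) (hd : 0 < d) (ht : 1 ≤ t)
    (f : ℝ → ℝ) (hf : Differentiable ℝ f)
    (hf' : ∀ x : ℝ, 0 < deriv f x)
    (htop : Filter.Tendsto f Filter.atTop Filter.atTop)
    (hbot : Filter.Tendsto f Filter.atBot Filter.atBot)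
    (v : Fin t → Fin d → ℝ) (hv : ∀ i j, v i j = 0 ∨ v i j = 1)
    (x : Fin t → ℝ) (hx : ∀ i, x i = 0 ∨ x i = 1) :
    ∃ θ : Fin d → ℝ,
      ∑ i : Fin t, (x i - f (∑ j : Fin d, v i j * θ j)) • v i = 0 :=
  mle_equation_has_solution_general d t f hf hf' htop hbot v x
end

section
/- Let f : ℝ → ℝ be twice differentiable with continuous second derivative, and suppose there are constants L₁, L₂ > 0 with 0 < f′(x) ≤ L₁ and f″(x) ≤ L₂ for all x ∈ ℝ. Then for every b ∈ ℝ there exists g : ℝ → ℝ, twice differentiable with continuous second derivative, such that: g(x) = f(x) for all x ≤ b; 0 < g′(x) ≤ L₁ and g″(x) ≤ L₂ for all x ∈ ℝ; and g(x) → +∞ as x → +∞. -/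
/-!
To the right of `b`, replace `f` by a function whose slope relaxes exponentially from
`c = f'(b)` to an asymptotic slope `A > 0`, i.e. whose derivative is `A + (c - A) e^{-k(x-b)}`.
Choosing `k (A - c) = f''(b)` makes the two pieces agree to second order at `b`. The new
derivative lies between `c` and `A`, the new second derivative is `f''(b) e^{-k(x-b)}`, and
the slope `A` forces growth to `+∞`. If `f''(b) > 0` we need `c < A ≤ L₁`, which is possible
because `f'` cannot attain its upper bound `L₁` at a point where `f'' ≠ 0`.
-/

open Set Filter Real Topology

section Gluing

variable {F : Type*} [NormedAddCommGroup F] [NormedSpace ℝ F] {u v u' v' : ℝ → F} {b : ℝ}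

theorem hasDerivAt_ite_le (hu : ∀ x, HasDerivAt u (u' x) x) (hv : ∀ x, HasDerivAt v (v' x) x)
    (h0 : u b = v b) (h1 : u' b = v' b) (x : ℝ) :
    HasDerivAt (fun y => if y ≤ b then u y else v y) (if x ≤ b then u' x else v' x) x := by
  rcases lt_trichotomy x b with hx | rfl | hx
  · rw [if_pos hx.le]
    exact (hu x).congr_of_eventuallyEq <|
      (eventually_lt_nhds hx).mono fun y hy => if_pos hy.le
  · rw [if_pos le_rfl]
    have hleft : HasDerivWithinAt (fun y => if y ≤ x then u y else v y) (u' x) (Iic x) x :=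
      (hu x).hasDerivWithinAt.congr (fun y hy => if_pos hy) (if_pos le_rfl)
    have hright : HasDerivWithinAt (fun y => if y ≤ x then u y else v y) (u' x) (Ici x) x := by
      rw [h1]
      refine (hv x).hasDerivWithinAt.congr (fun y hy => ?_) (by simp [h0])
      exact ite_eq_right_iff.2 fun hyx => le_antisymm hyx hy ▸ h0
    simpa [Iic_union_Ici] using hleft.union hright
  · rw [if_neg hx.not_ge]
    exact (hv x).congr_of_eventuallyEq <|
      (eventually_gt_nhds hx).mono fun y hy => if_neg hy.not_ge

theorem deriv_ite_le (hu : Differentiable ℝ u) (hv : Differentiable ℝ v)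
    (h0 : u b = v b) (h1 : deriv u b = deriv v b) :
    deriv (fun y => if y ≤ b then u y else v y) =
      fun x => if x ≤ b then deriv u x else deriv v x :=
  funext fun x =>
    (hasDerivAt_ite_le (fun x => (hu x).hasDerivAt) (fun x => (hv x).hasDerivAt) h0 h1 x).deriv

theorem differentiable_ite_le (hu : Differentiable ℝ u) (hv : Differentiable ℝ v)
    (h0 : u b = v b) (h1 : deriv u b = deriv v b) :
    Differentiable ℝ (fun y => if y ≤ b then u y else v y) := fun x =>
  (hasDerivAt_ite_le (fun x => (hu x).hasDerivAt) (fun x => (hv x).hasDerivAt) h0 h1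
    x).differentiableAt

theorem contDiff_two_ite_le (hu : ContDiff ℝ 2 u) (hv : ContDiff ℝ 2 v)
    (h0 : u b = v b) (h1 : deriv u b = deriv v b) (h2 : deriv (deriv u) b = deriv (deriv v) b) :
    ContDiff ℝ 2 (fun y => if y ≤ b then u y else v y) := by
  have hu1 := hu.differentiable_deriv_two
  have hv1 := hv.differentiable_deriv_two
  have hu0 := hu.differentiable two_ne_zero
  have hv0 := hv.differentiable two_ne_zero
  rw [show (2 : WithTop ℕ∞) = 1 + 1 from rfl, contDiff_succ_iff_deriv,
    deriv_ite_le hu0 hv0 h0 h1, contDiff_one_iff_deriv, deriv_ite_le hu1 hv1 h1 h2]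
  refine ⟨differentiable_ite_le hu0 hv0 h0 h1, by simp, differentiable_ite_le hu1 hv1 h1 h2, ?_⟩
  exact Continuous.if_le (hu.deriv' (n := 1)).continuous_deriv_one
    (hv.deriv' (n := 1)).continuous_deriv_one continuous_id continuous_const fun x hx => hx ▸ h2

end Gluing

/-- The function with value `y` and slope `c` at `b` whose slope relaxes exponentially, at
rate `k`, to `A`. -/
noncomputable def expTail (b y c A k : ℝ) (x : ℝ) : ℝ :=
  y + A * (x - b) + (c - A) / k * (1 - exp (-(k * (x - b))))

theorem hasDerivAt_exp_neg_mul_sub (b k x : ℝ) :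
    HasDerivAt (fun x => exp (-(k * (x - b)))) (-k * exp (-(k * (x - b)))) x := by
  simpa [mul_comm] using (((hasDerivAt_id x).sub_const b).const_mul k).neg.exp

section ExpTail

variable {b y c A k : ℝ}

theorem expTail_self : expTail b y c A k b = y := by
  simp [expTail]

theorem contDiff_expTail {n : WithTop ℕ∞} : ContDiff ℝ n (expTail b y c A k) := by
  unfold expTail; fun_prop

theorem deriv_expTail (hk : k ≠ 0) :
    deriv (expTail b y c A k) = fun x => A + (c - A) * exp (-(k * (x - b))) := by
  funext x
  refine HasDerivAt.deriv ?_
  have := (((hasDerivAt_id x).sub_const b).const_mul A).const_add y |>.add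
    (((hasDerivAt_exp_neg_mul_sub b k x).const_sub 1).const_mul ((c - A) / k))
  convert this using 1
  · rfl
  · field_simp

theorem deriv_deriv_expTail (hk : k ≠ 0) :
    deriv (deriv (expTail b y c A k)) = fun x => k * (A - c) * exp (-(k * (x - b))) := by
  funext x
  rw [deriv_expTail hk]
  convert ((hasDerivAt_exp_neg_mul_sub b k x).const_mul (c - A)).const_add A |>.deriv
    using 1
  ring

theorem exp_neg_mul_sub_mem_Ioc (hk : 0 ≤ k) {x : ℝ} (hx : b ≤ x) :
    exp (-(k * (x - b))) ∈ Ioc 0 1 :=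
  ⟨exp_pos _, exp_le_one_iff.2 (neg_nonpos.2 (mul_nonneg hk (sub_nonneg.2 hx)))⟩

theorem deriv_expTail_pos (hk : 0 < k) (hc : 0 < c) (hA : 0 < A) {x : ℝ} (hx : b ≤ x) :
    0 < deriv (expTail b y c A k) x := by
  obtain ⟨h0, h1⟩ := exp_neg_mul_sub_mem_Ioc hk.le hx
  rw [deriv_expTail hk.ne']
  nlinarith

theorem deriv_expTail_le {L : ℝ} (hk : 0 < k) (hc : c ≤ L) (hA : A ≤ L) {x : ℝ}
    (hx : b ≤ x) :
    deriv (expTail b y c A k) x ≤ L := by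
  obtain ⟨h0, h1⟩ := exp_neg_mul_sub_mem_Ioc hk.le hx
  rw [deriv_expTail hk.ne']
  nlinarith

theorem deriv_deriv_expTail_le {L : ℝ} (hk : 0 < k) (hL : 0 ≤ L) (hkL : k * (A - c) ≤ L)
    {x : ℝ} (hx : b ≤ x) : deriv (deriv (expTail b y c A k)) x ≤ L := by
  obtain ⟨h0, h1⟩ := exp_neg_mul_sub_mem_Ioc hk.le hx
  rw [deriv_deriv_expTail hk.ne']
  rcases le_total (k * (A - c)) 0 with h | h <;> nlinarith

theorem tendsto_expTail_atTop (hk : 0 < k) (hA : 0 < A) :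
    Tendsto (expTail b y c A k) atTop atTop := by
  have hlin : Tendsto (fun x => A * (x - b)) atTop atTop :=
    (tendsto_atTop_add_const_right _ _ tendsto_id).const_mul_atTop hA
  have hexp : Tendsto (fun x => exp (-(k * (x - b)))) atTop (𝓝 0) :=
    tendsto_exp_atBot.comp <| tendsto_neg_atTop_atBot.comp <|
      (tendsto_atTop_add_const_right _ _ tendsto_id).const_mul_atTop hk
  have hbdd : Tendsto (fun x => y + (c - A) / k * (1 - exp (-(k * (x - b))))) atTop
      (𝓝 (y + (c - A) / k * (1 - 0))) :=
    tendsto_const_nhds.add (tendsto_const_nhds.mul (tendsto_const_nhds.sub hexp))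
  refine (hlin.atTop_add hbdd).congr fun x => ?_
  simp only [expTail]
  ring

end ExpTail

theorem lt_of_forall_le_of_deriv_ne_zero {u : ℝ → ℝ} {L b : ℝ} (hu : ∀ x, u x ≤ L)
    (hb : deriv u b ≠ 0) : u b < L := by
  refine (hu b).lt_of_ne fun hbL => hb (IsLocalMax.deriv_eq_zero ?_)
  exact Eventually.of_forall fun x => hbL ▸ hu x

theorem exists_slope_rate {c d L : ℝ} (hc : 0 < c) (hcL : c ≤ L) (hd : 0 < d → c < L) :
    ∃ A k : ℝ, 0 < A ∧ A ≤ L ∧ 0 < k ∧ k * (A - c) = d := by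
  rcases le_or_gt d 0 with hd0 | hd0
  · have hcd : 0 < c - d := by linarith
    refine ⟨c ^ 2 / (c - d), (c - d) / c, by positivity, ?_, by positivity, ?_⟩
    · rw [div_le_iff₀ hcd]
      nlinarith
    · field_simp
      ring
  · have hLc : 0 < L - c := sub_pos.2 (hd hd0)
    exact ⟨L, d / (L - c), by linarith, le_rfl, by positivity, div_mul_cancel₀ _ hLc.ne'⟩

theorem link_function_upward_conversion_general
    (f : ℝ → ℝ) (hf : ContDiff ℝ 2 f)
    (L₁ L₂ : ℝ) (hL₂ : 0 < L₂)
    (hder : ∀ x : ℝ, 0 < deriv f x ∧ deriv f x ≤ L₁)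
    (hder2 : ∀ x : ℝ, deriv (deriv f) x ≤ L₂)
    (b : ℝ) :
    ∃ g : ℝ → ℝ, ContDiff ℝ 2 g ∧
      (∀ x ≤ b, g x = f x) ∧
      (∀ x : ℝ, 0 < deriv g x ∧ deriv g x ≤ L₁) ∧
      (∀ x : ℝ, deriv (deriv g) x ≤ L₂) ∧
      Filter.Tendsto g Filter.atTop Filter.atTop := by
  obtain ⟨A, k, hA, hAL, hk, hkA⟩ := exists_slope_rate (hder b).1 (hder b).2 fun hd =>
    lt_of_forall_le_of_deriv_ne_zero (fun x => (hder x).2) hd.ne'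
  set h := expTail b (f b) (deriv f b) A k
  have h0 : f b = h b := expTail_self.symm
  have h1 : deriv f b = deriv h b := by simp [h, deriv_expTail hk.ne']
  have h2 : deriv (deriv f) b = deriv (deriv h) b := by simp [h, deriv_deriv_expTail hk.ne', hkA]
  have hf1 := hf.differentiable two_ne_zero
  have hh1 : Differentiable ℝ h := contDiff_expTail.differentiable one_ne_zero
  have hh2 : Differentiable ℝ (deriv h) := contDiff_expTail.differentiable_deriv_two
  refine ⟨fun x => if x ≤ b then f x else h x, contDiff_two_ite_le hf contDiff_expTail h0 h1 h2,
    fun x hx => if_pos hx, fun x => ?_, fun x => ?_, ?_⟩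
  · rw [deriv_ite_le hf1 hh1 h0 h1]
    beta_reduce
    split_ifs with hx
    · exact hder x
    · have hbx := (not_le.1 hx).le
      exact ⟨deriv_expTail_pos hk (hder b).1 hA hbx, deriv_expTail_le hk (hder b).2 hAL hbx⟩
  · rw [deriv_ite_le hf1 hh1 h0 h1, deriv_ite_le hf.differentiable_deriv_two hh2 h1 h2]
    beta_reduce
    split_ifs with hx
    · exact hder2 x
    · exact deriv_deriv_expTail_le hk hL₂.le (hkA ▸ hder2 b) (not_le.1 hx).le
  · exact (tendsto_expTail_atTop hk hA).congr' <|
      (eventually_gt_atTop b).mono fun x hx => (if_neg hx.not_ge).symm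

/-- Upward conversion of the BGLM link function (Appendix A.1): any C² function
with `0 < f' ≤ L₁` and `f'' ≤ L₂` can be modified on `(b, ∞)` so that it tends
to `+∞`, while agreeing with `f` on `(-∞, b]` and preserving the derivative
bounds. -/
theorem link_function_upward_conversion
    (f : ℝ → ℝ) (hf : ContDiff ℝ 2 f)
    (L₁ L₂ : ℝ) (hL₁ : 0 < L₁) (hL₂ : 0 < L₂)
    (hder : ∀ x : ℝ, 0 < deriv f x ∧ deriv f x ≤ L₁)
    (hder2 : ∀ x : ℝ, deriv (deriv f) x ≤ L₂)
    (b : ℝ) :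
    ∃ g : ℝ → ℝ, ContDiff ℝ 2 g ∧
      (∀ x ≤ b, g x = f x) ∧
      (∀ x : ℝ, 0 < deriv g x ∧ deriv g x ≤ L₁) ∧
      (∀ x : ℝ, deriv (deriv g) x ≤ L₂) ∧
      Filter.Tendsto g Filter.atTop Filter.atTop :=
  link_function_upward_conversion_general f hf L₁ L₂ hL₂ hder hder2 b
end

section
/- Let d and D be integers with 1 ≤ d ≤ D and D ≥ 2, and let ζ ∈ (0, 1/2]. Let μ be a probability measure on {0,1}^d such that: (i) μ-almost surely the first coordinate x₁ equals 1; and (ii) for every coordinate index i ∈ {2, …, d} and every assignment z ∈ {0,1}^{d−1} of the remaining coordinates having positive μ-probability, the conditional probabilities satisfy μ(x_i = 1 ∣ the other coordinates equal z) ≥ ζ and μ(x_i = 0 ∣ the other coordinates equal z) ≥ ζ. Then for every v ∈ ℝ^d with ‖v‖₂ = 1, one has μ({x ∈ {0,1}^d : |∑_{i=1}^d x_i v_i| ≥ 1/√(4D² − 3)}) ≥ ζ. -/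
/-!
Let `c = 1/√(4D²-3)`. If some coordinate `i ≠ 1` has `|vᵢ| ≥ 2c`, then on every fibre of
"forget coordinate `i`" the two points differ in `⟪x, v⟫` by `vᵢ`, so one of them has
`|⟪x, v⟫| ≥ c`; assumption (ii) gives that point conditional mass `≥ ζ`, and summing over the
fibres gives the bound. Otherwise all `|vⱼ| < 2c` for `j ≠ 1`, and with
`T = ∑_{j ≠ 1} |vⱼ| ≤ 2c(D-1)` the unit-norm condition forces `|v₁| ≥ c + T`, because
`c² (1 + 4(D-1) + 4(D-1)²) = c² (4D² - 3) = 1`; since `x₁ = 1` almost surely,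
`|⟪x, v⟫| ≥ |v₁| - T ≥ c` almost surely.
-/

open MeasureTheory Finset

theorem mul_measure_univ_le_of_forall_fibre {α β : Type*} [MeasurableSpace α]
    [MeasurableSpace β] [MeasurableSingletonClass β] [Fintype β] {μ : Measure α} {f : α → β}
    (hf : Measurable f) {E : Set α} {c : ENNReal}
    (h : ∀ x, c * μ (f ⁻¹' {f x}) ≤ μ (E ∩ f ⁻¹' {f x})) :
    c * μ Set.univ ≤ μ E := by
  have hfibre : ∀ b, MeasurableSet (f ⁻¹' {b}) := fun b => hf (measurableSet_singleton b)
  have hle : ∀ b, c * μ (f ⁻¹' {b}) ≤ μ.restrict E (f ⁻¹' {b}) := by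
    intro b
    rw [Measure.restrict_apply (hfibre b), Set.inter_comm]
    by_cases hb : b ∈ Set.range f
    · obtain ⟨x, rfl⟩ := hb
      exact h x
    · simp [Set.preimage_singleton_eq_empty.mpr hb]
  calc c * μ Set.univ = ∑ b, c * μ (f ⁻¹' {b}) := by
        rw [← Finset.mul_sum, sum_measure_preimage_singleton _ fun b _ => hfibre b,
          coe_univ, Set.preimage_univ]
    _ ≤ ∑ b, μ.restrict E (f ⁻¹' {b}) := sum_le_sum fun b _ => hle b
    _ = μ E := by
        rw [sum_measure_preimage_singleton _ fun b _ => hfibre b, coe_univ, Set.preimage_univ,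
          Measure.restrict_apply_univ]

theorem measurable_domRestrict_pi {ι γ : Type*} [MeasurableSpace γ] (s : Set ι) :
    Measurable (s.domRestrict : (ι → γ) → s → γ) :=
  measurable_pi_lambda _ fun j => measurable_pi_apply (j : ι)

theorem preimage_domRestrict_compl_singleton {ι γ : Type*} (i : ι) (z : ι → γ) :
    (Set.domRestrict {i}ᶜ : (ι → γ) → ({i}ᶜ : Set ι) → γ) ⁻¹' {Set.domRestrict {i}ᶜ z} =
      {x | ∀ j ≠ i, x j = z j} := by
  ext x
  simp [funext_iff, Set.domRestrict_apply]

theorem le_abs_or_le_abs_of_two_mul_le_abs_sub {a b c : ℝ} (h : 2 * c ≤ |a - b|) :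
    c ≤ |a| ∨ c ≤ |b| := by
  by_contra! hlt
  linarith [abs_sub a b]

section BoolDot

variable {ι : Type*} [Fintype ι]

/-- `⟪x, v⟫` for a 0/1-vector `x` encoded as `ι → Bool`. -/
def boolDot (v : ι → ℝ) (x : ι → Bool) : ℝ :=
  ∑ i, (if x i then 1 else 0) * v i

theorem boolDot_sub_boolDot_of_eq_off (v : ι → ℝ) {x y : ι → Bool} {i : ι}
    (hxy : ∀ j ≠ i, x j = y j) (hx : x i = true) (hy : y i = false) :
    boolDot v x - boolDot v y = v i := by
  rw [boolDot, boolDot, ← sum_sub_distrib, sum_eq_single i]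
  · simp [hx, hy]
  · intro j _ hj
    rw [hxy j hj, sub_self]
  · simp

theorem abs_boolDot_sub_le [DecidableEq ι] (v : ι → ℝ) {x : ι → Bool} {i : ι}
    (hx : x i = true) : |boolDot v x - v i| ≤ ∑ j ∈ univ.erase i, |v j| := by
  rw [boolDot, ← add_sum_erase _ _ (mem_univ i), hx]
  simp only [if_true, one_mul, add_sub_cancel_left]
  refine (abs_sum_le_sum_abs _ _).trans (sum_le_sum fun j _ => ?_)
  cases x j <;> simp

theorem mul_measure_univ_le_of_conditional [DecidableEq ι] {μ : Measure (ι → Bool)}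
    {ζ : ENNReal} {i : ι}
    (hcond : ∀ z : ι → Bool, 0 < μ {x | ∀ j ≠ i, x j = z j} →
      ζ * μ {x | ∀ j ≠ i, x j = z j} ≤ μ {x | x i = true ∧ ∀ j ≠ i, x j = z j} ∧
      ζ * μ {x | ∀ j ≠ i, x j = z j} ≤ μ {x | x i = false ∧ ∀ j ≠ i, x j = z j})
    {v : ι → ℝ} {c : ℝ} (hvi : 2 * c ≤ |v i|) :
    ζ * μ Set.univ ≤ μ {x | c ≤ |boolDot v x|} := by
  refine mul_measure_univ_le_of_forall_fibre (measurable_domRestrict_pi {i}ᶜ) fun z => ?_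
  rw [preimage_domRestrict_compl_singleton]
  rcases eq_zero_or_pos (μ {x | ∀ j ≠ i, x j = z j}) with hzero | hpos
  · rw [hzero, mul_zero]
    exact zero_le
  obtain ⟨htrue, hfalse⟩ := hcond z hpos
  by_cases hgood : ∀ x, x i = true → (∀ j ≠ i, x j = z j) → c ≤ |boolDot v x|
  · exact htrue.trans (measure_mono fun x hx => ⟨hgood x hx.1 hx.2, hx.2⟩)
  push Not at hgood
  obtain ⟨x, hxi, hxz, hxc⟩ := hgood
  refine hfalse.trans (measure_mono fun y hy => ⟨?_, hy.2⟩)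
  have hdiff : boolDot v x - boolDot v y = v i :=
    boolDot_sub_boolDot_of_eq_off v (fun j hj => (hxz j hj).trans (hy.2 j hj).symm) hxi hy.1
  rw [← hdiff] at hvi
  exact (le_abs_or_le_abs_of_two_mul_le_abs_sub hvi).resolve_left hxc.not_ge

theorem add_sum_erase_abs_le_abs [DecidableEq ι] {v : ι → ℝ} (hv : ∑ j, v j ^ 2 = 1) {i : ι}
    {c : ℝ} (hc : 0 ≤ c) {D : ℝ} (hcD : c ^ 2 * (4 * D ^ 2 - 3) = 1)
    (hcard : (Fintype.card ι : ℝ) ≤ D) (hsmall : ∀ j ≠ i, |v j| < 2 * c) :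
    c + ∑ j ∈ univ.erase i, |v j| ≤ |v i| := by
  set T := ∑ j ∈ univ.erase i, |v j|
  have hT0 : 0 ≤ T := sum_nonneg fun j _ => abs_nonneg _
  have hT : T ≤ 2 * c * (D - 1) := by
    have hcard' : ((univ.erase i).card : ℝ) = Fintype.card ι - 1 := by
      rw [card_erase_of_mem (mem_univ i), card_univ,
        Nat.cast_sub (Fintype.card_pos_iff.mpr ⟨i⟩), Nat.cast_one]
    calc T ≤ (univ.erase i).card • (2 * c) :=
          sum_le_card_nsmul _ _ _ fun j hj => (hsmall j (ne_of_mem_erase hj)).le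
      _ ≤ 2 * c * (D - 1) := by rw [nsmul_eq_mul, hcard']; nlinarith
  have hsq : ∑ j ∈ univ.erase i, v j ^ 2 ≤ 2 * c * T := by
    rw [mul_sum]
    refine sum_le_sum fun j hj => ?_
    rw [← sq_abs]
    nlinarith [hsmall j (ne_of_mem_erase hj), abs_nonneg (v j)]
  have hvi : v i ^ 2 + ∑ j ∈ univ.erase i, v j ^ 2 = 1 := by
    rwa [add_sum_erase _ (fun j => v j ^ 2) (mem_univ i)]
  have hsq_le : (c + T) ^ 2 ≤ v i ^ 2 := by
    nlinarith [mul_le_mul hT hT hT0 (by linarith), mul_nonneg hc hT0]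
  exact (le_abs_self _).trans (sq_le_sq.mp hsq_le)

end BoolDot

theorem initialization_anticoncentration_general
    (d D : ℕ) (hd : 1 ≤ d) (hdD : d ≤ D)
    (ζ : ℝ) (hζhalf : ζ ≤ 1 / 2)
    (μ : Measure (Fin d → Bool)) [IsProbabilityMeasure μ]
    (hfirst : ∀ᵐ x ∂μ, x ⟨0, hd⟩ = true)
    (hcond : ∀ i : Fin d, i ≠ ⟨0, hd⟩ → ∀ z : Fin d → Bool,
      0 < μ {x | ∀ j ≠ i, x j = z j} →
      ENNReal.ofReal ζ * μ {x | ∀ j ≠ i, x j = z j} ≤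
          μ {x | x i = true ∧ ∀ j ≠ i, x j = z j} ∧
      ENNReal.ofReal ζ * μ {x | ∀ j ≠ i, x j = z j} ≤
          μ {x | x i = false ∧ ∀ j ≠ i, x j = z j})
    (v : Fin d → ℝ) (hv : ∑ i : Fin d, (v i) ^ 2 = 1) :
    ENNReal.ofReal ζ ≤
      μ {x | 1 / Real.sqrt (4 * (D : ℝ) ^ 2 - 3) ≤
        |∑ i : Fin d, (if x i then (1 : ℝ) else 0) * v i|} := by
  set c := 1 / Real.sqrt (4 * (D : ℝ) ^ 2 - 3)
  change ENNReal.ofReal ζ ≤ μ {x | c ≤ |boolDot v x|}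
  have hDpos : (0 : ℝ) < 4 * (D : ℝ) ^ 2 - 3 := by
    have : (1 : ℝ) ≤ D := by exact_mod_cast hd.trans hdD
    nlinarith
  have hcD : c ^ 2 * (4 * (D : ℝ) ^ 2 - 3) = 1 := by
    rw [div_pow, Real.sq_sqrt hDpos.le]
    field_simp
  by_cases hbig : ∃ i ≠ (⟨0, hd⟩ : Fin d), 2 * c ≤ |v i|
  · obtain ⟨i, hi, hvi⟩ := hbig
    simpa using mul_measure_univ_le_of_conditional (hcond i hi) hvi
  push Not at hbig
  have hdom := add_sum_erase_abs_le_abs hv (by positivity) hcD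
    (by simpa using (Nat.cast_le.mpr hdD : (d : ℝ) ≤ D)) hbig
  have hae : ∀ᵐ x ∂μ, c ≤ |boolDot v x| := hfirst.mono fun x hx => by
    have := abs_boolDot_sub_le v hx
    linarith [abs_sub_abs_le_abs_sub (v ⟨0, hd⟩) (boolDot v x),
      abs_sub_comm (boolDot v x) (v ⟨0, hd⟩)]
  calc ENNReal.ofReal ζ ≤ 1 := ENNReal.ofReal_le_one.mpr (by linarith)
    _ = μ {x | c ≤ |boolDot v x|} :=
        ((ae_iff_measure_eq (Set.toFinite _).measurableSet.nullMeasurableSet).mp hae).trans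
          measure_univ |>.symm

/-- Anti-concentration lemma for the initialization phase (Appendix C): if a
probability measure on `{0,1}^d` has its first coordinate almost surely `1`
and every other coordinate has conditional probability at least `ζ` of being
`1` and of being `0` given any assignment of the remaining coordinates, then
for every unit vector `v`, with probability at least `ζ` the inner product
with `v` is at least `1/√(4D²-3)` in absolute value. -/
theorem initialization_anticoncentration
    (d D : ℕ) (hd : 1 ≤ d) (hdD : d ≤ D) (hD : 2 ≤ D)
    (ζ : ℝ) (hζ0 : 0 < ζ) (hζhalf : ζ ≤ 1 / 2)
    (μ : Measure (Fin d → Bool)) [IsProbabilityMeasure μ]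
    (hfirst : ∀ᵐ x ∂μ, x ⟨0, hd⟩ = true)
    (hcond : ∀ i : Fin d, i ≠ ⟨0, hd⟩ → ∀ z : Fin d → Bool,
      0 < μ {x | ∀ j ≠ i, x j = z j} →
      ENNReal.ofReal ζ * μ {x | ∀ j ≠ i, x j = z j} ≤
          μ {x | x i = true ∧ ∀ j ≠ i, x j = z j} ∧
      ENNReal.ofReal ζ * μ {x | ∀ j ≠ i, x j = z j} ≤
          μ {x | x i = false ∧ ∀ j ≠ i, x j = z j})
    (v : Fin d → ℝ) (hv : ∑ i : Fin d, (v i) ^ 2 = 1) :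
    ENNReal.ofReal ζ ≤
      μ {x | 1 / Real.sqrt (4 * (D : ℝ) ^ 2 - 3) ≤
        |∑ i : Fin d, (if x i then (1 : ℝ) else 0) * v i|} :=
  initialization_anticoncentration_general d D hd hdD ζ hζhalf μ hfirst hcond v hv
end

section
/- Let d, D be integers with 2 ≤ D and 1 ≤ d ≤ D, and set D₀ = √(D−1) + 1/(2√(D−1)). If v ∈ ℝ^d satisfies ‖v‖₂ = 1 and |v₁| ≥ D₀/√(D₀² + 1), then for every x ∈ {0,1}^d with x₁ = 1 one has |∑_{i=1}^d x_i v_i| ≥ 1/√(4D² − 3). -/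
/-!
Split `⟨x, v⟩ = v₁ + T` with `T = ∑_{i ≥ 2} xᵢ vᵢ`. By Cauchy–Schwarz `|T| ≤ √((D-1)(1 - v₁²))`,
and the hypothesis on `v₁` gives `1 - v₁² ≤ 1/(D₀² + 1)`, so
`|⟨x, v⟩| ≥ (D₀ - √(D-1)) / √(D₀² + 1) = 1 / (2 √(D-1) √(D₀² + 1))`.
With `s = √(D-1)` one has `4 s² (D₀² + 1) = 4 s⁴ + 8 s² + 1 = 4 D² - 3`.
-/

open Finset

lemma sq_sum_mul_le_card_mul_sum_sq {ι : Type*} (s : Finset ι) (x v : ι → ℝ)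
    (hx : ∀ i ∈ s, |x i| ≤ 1) :
    (∑ i ∈ s, x i * v i) ^ 2 ≤ #s * ∑ i ∈ s, v i ^ 2 := by
  have hx2 : ∑ i ∈ s, x i ^ 2 ≤ #s := by
    simpa using sum_le_card_nsmul s (fun i ↦ x i ^ 2) 1
      fun i hi ↦ (sq_le_one_iff_abs_le_one _).2 (hx i hi)
  calc (∑ i ∈ s, x i * v i) ^ 2 ≤ (∑ i ∈ s, x i ^ 2) * ∑ i ∈ s, v i ^ 2 :=
        sum_mul_sq_le_sq_mul_sq s x v
    _ ≤ #s * ∑ i ∈ s, v i ^ 2 := by gcongr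

lemma abs_apply_sub_sqrt_le_abs_sum_mul {ι : Type*} [Fintype ι] [DecidableEq ι]
    (n : ℝ) (hn : (Fintype.card ι : ℝ) ≤ n + 1) (v x : ι → ℝ) (hv : ∑ i, v i ^ 2 = 1)
    (hx : ∀ i, |x i| ≤ 1) (i₀ : ι) (hxi₀ : x i₀ = 1) :
    |v i₀| - √(n * (1 - v i₀ ^ 2)) ≤ |∑ i, x i * v i| := by
  set T := ∑ i ∈ univ.erase i₀, x i * v i
  have hsplit : ∑ i, x i * v i = v i₀ + T := by
    rw [← add_sum_erase _ _ (mem_univ i₀), hxi₀, one_mul]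
  have hrest : ∑ i ∈ univ.erase i₀, v i ^ 2 = 1 - v i₀ ^ 2 := by
    rw [sum_erase_eq_sub (mem_univ i₀), hv]
  have hcard : (#(univ.erase i₀) : ℝ) ≤ n := by
    rw [card_erase_of_mem (mem_univ i₀), card_univ,
      Nat.cast_pred (Fintype.card_pos_iff.2 ⟨i₀⟩)]
    linarith
  have hT : |T| ≤ √(n * (1 - v i₀ ^ 2)) := by
    refine Real.abs_le_sqrt ?_
    calc T ^ 2 ≤ #(univ.erase i₀) * ∑ i ∈ univ.erase i₀, v i ^ 2 :=
          sq_sum_mul_le_card_mul_sum_sq _ x v fun i _ ↦ hx i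
      _ ≤ n * (1 - v i₀ ^ 2) := by
          rw [hrest]
          gcongr
          exact hrest ▸ sum_nonneg fun i _ ↦ sq_nonneg (v i)
  have htri := abs_sub_abs_le_abs_sub (v i₀) (-T)
  rw [abs_neg, sub_neg_eq_add] at htri
  rw [hsplit]
  linarith

lemma one_sub_sq_le_inv_of_div_sqrt_le_abs {E a : ℝ} (hE : 0 ≤ E)
    (ha : E / √(E ^ 2 + 1) ≤ |a|) :
    1 - a ^ 2 ≤ 1 / (E ^ 2 + 1) := by
  have hpos : 0 < E ^ 2 + 1 := by positivity
  have hsq : E ^ 2 / (E ^ 2 + 1) ≤ a ^ 2 := by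
    simpa [div_pow, Real.sq_sqrt hpos.le] using pow_le_pow_left₀ (by positivity) ha 2
  have : 1 - E ^ 2 / (E ^ 2 + 1) = 1 / (E ^ 2 + 1) := by field_simp; ring
  linarith

lemma inv_two_mul_mul_sqrt_le_abs_sub_sqrt {s a : ℝ} (hs : 0 < s)
    (ha : (s + 1 / (2 * s)) / √((s + 1 / (2 * s)) ^ 2 + 1) ≤ |a|) :
    1 / (2 * s * √((s + 1 / (2 * s)) ^ 2 + 1)) ≤ |a| - √(s ^ 2 * (1 - a ^ 2)) := by
  set E := s + 1 / (2 * s)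
  set Q := √(E ^ 2 + 1)
  have hQ : 0 < Q := Real.sqrt_pos.2 (by positivity)
  have hrest : √(1 - a ^ 2) ≤ 1 / Q := by
    rw [← Real.sqrt_sq (by positivity : 0 ≤ 1 / Q), div_pow, Real.sq_sqrt (by positivity),
      one_pow]
    exact Real.sqrt_le_sqrt (one_sub_sq_le_inv_of_div_sqrt_le_abs (by positivity) ha)
  calc 1 / (2 * s * Q) = E / Q - s * (1 / Q) := by simp only [E]; field_simp; ring
    _ ≤ |a| - s * √(1 - a ^ 2) := by gcongr
    _ = |a| - √(s ^ 2 * (1 - a ^ 2)) := by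
        rw [Real.sqrt_mul (sq_nonneg s), Real.sqrt_sq hs.le]

lemma two_mul_mul_sqrt_eq_sqrt_four_mul_sq_sub_three {s : ℝ} (hs : 0 < s) :
    2 * s * √((s + 1 / (2 * s)) ^ 2 + 1) = √(4 * (s ^ 2 + 1) ^ 2 - 3) := by
  have hexpand : 4 * (s ^ 2 + 1) ^ 2 - 3 = (2 * s) ^ 2 * ((s + 1 / (2 * s)) ^ 2 + 1) := by
    field_simp; ring
  rw [hexpand, Real.sqrt_mul (sq_nonneg _), Real.sqrt_sq (by positivity)]

/-- Deterministic case of the initialization anti-concentration lemma: if the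
first coordinate of a unit vector `v ∈ ℝ^d` satisfies `|v₁| ≥ D₀/√(D₀²+1)`
with `D₀ = √(D-1) + 1/(2√(D-1))`, then every binary vector `x` with first
coordinate `1` has `|⟨x, v⟩| ≥ 1/√(4D²-3)`. -/
theorem large_first_coordinate_case
    (d D : ℕ) (hD : 2 ≤ D) (hd : 1 ≤ d) (hdD : d ≤ D)
    (D₀ : ℝ) (hD₀ : D₀ = Real.sqrt ((D : ℝ) - 1) + 1 / (2 * Real.sqrt ((D : ℝ) - 1)))
    (v : Fin d → ℝ) (hv : ∑ i : Fin d, (v i) ^ 2 = 1)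
    (hv1 : D₀ / Real.sqrt (D₀ ^ 2 + 1) ≤ |v ⟨0, hd⟩|)
    (x : Fin d → ℝ) (hx : ∀ i, x i = 0 ∨ x i = 1) (hx1 : x ⟨0, hd⟩ = 1) :
    1 / Real.sqrt (4 * (D : ℝ) ^ 2 - 3) ≤ |∑ i : Fin d, x i * v i| := by
  set s := √((D : ℝ) - 1)
  have hD1 : (1 : ℝ) < D := by exact_mod_cast hD
  have hs : 0 < s := Real.sqrt_pos.2 (by linarith)
  have hs2 : s ^ 2 = D - 1 := Real.sq_sqrt (by linarith)
  have hxabs : ∀ i, |x i| ≤ 1 := fun i ↦ by rcases hx i with h | h <;> simp [h]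
  subst hD₀
  calc 1 / √(4 * (D : ℝ) ^ 2 - 3) = 1 / (2 * s * √((s + 1 / (2 * s)) ^ 2 + 1)) := by
        rw [two_mul_mul_sqrt_eq_sqrt_four_mul_sq_sub_three hs, hs2, sub_add_cancel]
    _ ≤ |v ⟨0, hd⟩| - √(s ^ 2 * (1 - v ⟨0, hd⟩ ^ 2)) :=
        inv_two_mul_mul_sqrt_le_abs_sub_sqrt hs hv1
    _ ≤ |∑ i, x i * v i| :=
        abs_apply_sub_sqrt_le_abs_sum_mul _ (by simp [hs2, hdD]) v x hv hxabs _ hx1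
end

section
/- Let d, D be integers with 2 ≤ d ≤ D, and set D₀ = √(D−1) + 1/(2√(D−1)). If v ∈ ℝ^d satisfies ‖v‖₂ = 1 and |v₁| < D₀/√(D₀² + 1), then max_{2 ≤ i ≤ d} |v_i| ≥ 2/√(4D² − 3). -/
/-!
Since `‖v‖ = 1`, the coordinates other than the first carry squared mass
`1 - v₁² > 1 / (D₀² + 1)`, and the choice of `D₀` makes `D₀² + 1 = (4D² - 3) / (4(D - 1))`.
The mass exceeds `(D - 1) · 4 / (4D² - 3) ≥ (d - 1) · 4 / (4D² - 3)` and is spread over `d - 1`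
coordinates, so one of them has `v_i² > 4 / (4D² - 3)`.
-/

open Finset Real

lemma exists_ne_lt_sq_of_sum_sq_eq_one {ι : Type*} [Fintype ι] [DecidableEq ι] {v : ι → ℝ}
    (hv : ∑ i, v i ^ 2 = 1) {i₀ : ι} {c : ℝ}
    (h : v i₀ ^ 2 + (Fintype.card ι - 1) * c < 1) :
    ∃ i ≠ i₀, c < v i ^ 2 := by
  have hrest : ∑ i ∈ univ.erase i₀, v i ^ 2 = 1 - v i₀ ^ 2 := by
    rw [← hv, ← add_sum_erase univ _ (mem_univ i₀), add_sub_cancel_left]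
  have hlt : ∑ _i ∈ univ.erase i₀, c < ∑ i ∈ univ.erase i₀, v i ^ 2 := by
    rw [sum_const, nsmul_eq_mul, cast_card_erase_of_mem (mem_univ i₀), card_univ, hrest]
    linarith
  obtain ⟨i, hi, hci⟩ := exists_lt_of_sum_lt hlt
  exact ⟨i, ne_of_mem_erase hi, hci⟩

lemma sq_lt_div_of_abs_lt_div_sqrt {x a b : ℝ} (hb : 0 ≤ b) (h : |x| < a / √b) :
    x ^ 2 < a ^ 2 / b := by
  rw [← sq_sqrt hb, ← div_pow, ← sq_abs]
  exact pow_lt_pow_left₀ h (abs_nonneg x) two_ne_zero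

lemma div_sqrt_le_abs_of_div_le_sq {x a b : ℝ} (ha : 0 ≤ a) (h : a ^ 2 / b ≤ x ^ 2) :
    a / √b ≤ |x| := by
  rw [← sqrt_sq ha, ← sqrt_div (sq_nonneg a), ← sqrt_sq_eq_abs]
  exact sqrt_le_sqrt h

lemma sq_div_sq_add_one_add_eq_one {x y : ℝ} (hx : 1 < x)
    (hy : y = √(x - 1) + 1 / (2 * √(x - 1))) :
    y ^ 2 / (y ^ 2 + 1) + (x - 1) * (4 / (4 * x ^ 2 - 3)) = 1 := by
  have hr : 0 < √(x - 1) := sqrt_pos.mpr (by linarith)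
  have hx' : x = √(x - 1) ^ 2 + 1 := by rw [sq_sqrt (by linarith)]; ring
  subst hy
  generalize √(x - 1) = r at hr hx' ⊢
  subst hx'
  have : 4 * (r ^ 2 + 1) ^ 2 - 3 = 4 * r ^ 4 + 8 * r ^ 2 + 1 := by ring
  rw [this]
  field_simp
  ring

/-- Second deterministic step of the initialization anti-concentration lemma:
if the first coordinate of a unit vector `v ∈ ℝ^d` satisfies
`|v₁| < D₀/√(D₀²+1)` with `D₀ = √(D-1) + 1/(2√(D-1))`, then some other
coordinate satisfies `|v_i| ≥ 2/√(4D²-3)`. -/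
theorem small_first_coordinate_case
    (d D : ℕ) (hd : 2 ≤ d) (hdD : d ≤ D)
    (D₀ : ℝ) (hD₀ : D₀ = Real.sqrt ((D : ℝ) - 1) + 1 / (2 * Real.sqrt ((D : ℝ) - 1)))
    (v : Fin d → ℝ) (hv : ∑ i : Fin d, (v i) ^ 2 = 1)
    (hv1 : |v ⟨0, by omega⟩| < D₀ / Real.sqrt (D₀ ^ 2 + 1)) :
    ∃ i : Fin d, i ≠ ⟨0, by omega⟩ ∧ 2 / Real.sqrt (4 * (D : ℝ) ^ 2 - 3) ≤ |v i| := by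
  have hD1 : (1 : ℝ) < D := by exact_mod_cast (show 1 < D by omega)
  set c := 4 / (4 * (D : ℝ) ^ 2 - 3)
  have hc_nonneg : 0 ≤ c := div_nonneg zero_le_four (by nlinarith)
  have hcount : ((d : ℝ) - 1) * c ≤ (D - 1) * c :=
    mul_le_mul_of_nonneg_right (by gcongr) hc_nonneg
  have hfirst := sq_lt_div_of_abs_lt_div_sqrt (by positivity) hv1
  have hsplit := sq_div_sq_add_one_add_eq_one hD1 hD₀
  obtain ⟨i, hi, hvi⟩ := exists_ne_lt_sq_of_sum_sq_eq_one hv (c := c)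
    (by rw [Fintype.card_fin]; linarith)
  exact ⟨i, hi, div_sqrt_le_abs_of_div_le_sq zero_le_two (by norm_num; exact hvi.le)⟩
end

section
/- Let p, n, T be positive integers with p ≤ n. Let W₁, …, W_T ∈ ℝ^p satisfy ‖W_t‖₂² ≤ p for every t. Define real p×p matrices by M₀ = I_p (the identity) and M_t = M_{t−1} + W_t W_tᵀ for 1 ≤ t ≤ T. Then every M_t is symmetric positive definite (in particular invertible), and ∑_{t=1}^T W_tᵀ M_{t−1}^{−1} W_t ≤ (n·p / log(n+1)) · log(1 + T). -/
/-!
Write `s_t = W_tᵀ M_{t-1}⁻¹ W_t`. The matrix determinant lemma gives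
`det M_t = det M_{t-1} (1 + s_t)`, so `∑ log (1 + s_t) = log det M_T`, and AM–GM on the
eigenvalues bounds `det M_T ≤ (tr M_T / p) ^ p ≤ (1 + T) ^ p`. Since `M_{t-1} ≥ I`,
`s_t ≤ ‖W_t‖² ≤ n`, and on `[0, n]` concavity of `log (1 + ·)` gives
`s_t log (n + 1) ≤ n log (1 + s_t)`.
-/

open Matrix

open scoped MatrixOrder

namespace Matrix

variable {ι : Type*}

theorem det_add_vecMulVec [Fintype ι] [DecidableEq ι] {R : Type*} [CommRing R]
    {A : Matrix ι ι R} (hA : IsUnit A.det) (u v : ι → R) :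
    (A + vecMulVec u v).det = A.det * (1 + v ⬝ᵥ (A⁻¹ *ᵥ u)) := by
  rw [vecMulVec_eq Unit, det_add_replicateCol_mul_replicateRow hA]
  congr 1
  rw [Matrix.det_unique, add_apply, one_apply_eq, ← replicateRow_vecMul,
    replicateRow_mul_replicateCol_apply, ← dotProduct_mulVec]

theorem posSemidef_vecMulVec_self [Fintype ι] (w : ι → ℝ) : (vecMulVec w w).PosSemidef := by
  simpa using posSemidef_vecMulVec_self_star w

theorem posDef_of_one_le [DecidableEq ι] {A : Matrix ι ι ℝ} (hA : 1 ≤ A) : A.PosDef := by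
  simpa using PosDef.one.add_posSemidef (le_iff.mp hA)

theorem dotProduct_self_le_dotProduct_mulVec_of_one_le [Fintype ι] [DecidableEq ι]
    {A : Matrix ι ι ℝ} (hA : 1 ≤ A) (v : ι → ℝ) : v ⬝ᵥ v ≤ v ⬝ᵥ (A *ᵥ v) := by
  have := (le_iff.mp hA).dotProduct_mulVec_nonneg v
  simp only [star_trivial, sub_mulVec, one_mulVec, dotProduct_sub] at this
  linarith

theorem dotProduct_inv_mulVec_le_of_one_le [Fintype ι] [DecidableEq ι] {A : Matrix ι ι ℝ}
    (hA : 1 ≤ A) (w : ι → ℝ) : w ⬝ᵥ (A⁻¹ *ᵥ w) ≤ w ⬝ᵥ w := by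
  set u := A⁻¹ *ᵥ w
  have hAu : A *ᵥ u = w := by
    rw [mulVec_mulVec, mul_nonsing_inv _ (posDef_of_one_le hA).det_pos.ne'.isUnit, one_mulVec]
  have hu : u ⬝ᵥ u ≤ u ⬝ᵥ w := hAu ▸ dotProduct_self_le_dotProduct_mulVec_of_one_le hA u
  have hcs : (u ⬝ᵥ w) ^ 2 ≤ (u ⬝ᵥ u) * (w ⬝ᵥ w) := by
    simpa [dotProduct, pow_two] using Finset.sum_mul_sq_le_sq_mul_sq Finset.univ u w
  have huu : 0 ≤ u ⬝ᵥ u := by simpa using dotProduct_self_star_nonneg u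
  have hww : 0 ≤ w ⬝ᵥ w := by simpa using dotProduct_self_star_nonneg w
  rw [dotProduct_comm]
  nlinarith [mul_le_mul_of_nonneg_right hu hww]

theorem PosDef.dotProduct_inv_mulVec_nonneg [Fintype ι] [DecidableEq ι] {A : Matrix ι ι ℝ}
    (hA : A.PosDef) (w : ι → ℝ) : 0 ≤ w ⬝ᵥ (A⁻¹ *ᵥ w) := by
  simpa using hA.inv.posSemidef.dotProduct_mulVec_nonneg w

theorem PosSemidef.det_le_trace_div_card_pow [Fintype ι] [DecidableEq ι] {A : Matrix ι ι ℝ}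
    (hA : A.PosSemidef) : A.det ≤ (A.trace / Fintype.card ι) ^ Fintype.card ι := by
  rcases isEmpty_or_nonempty ι with hι | hι
  · simp
  set c := Fintype.card ι
  have hc : (c : ℝ) ≠ 0 := Nat.cast_ne_zero.mpr Fintype.card_ne_zero
  set ev := hA.isHermitian.eigenvalues
  have hev : ∀ i, 0 ≤ ev i := hA.eigenvalues_nonneg
  have hdet : A.det = ∏ i, ev i := by simpa using hA.isHermitian.det_eq_prod_eigenvalues
  have htr : A.trace = ∑ i, ev i := by simpa using hA.isHermitian.trace_eq_sum_eigenvalues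
  have hprod : 0 ≤ ∏ i, ev i := Finset.prod_nonneg fun i _ => hev i
  have amgm : (∏ i, ev i) ^ (c⁻¹ : ℝ) ≤ A.trace / c := by
    rw [← Real.finsetProd_rpow _ _ fun i _ => hev i, htr, Finset.sum_div]
    simpa [div_eq_inv_mul] using Real.geom_mean_le_arith_mean_weighted Finset.univ
      (fun _ => (c : ℝ)⁻¹) ev (fun _ _ => by positivity) (by simp [c, hc]) (fun i _ => hev i)
  calc A.det = ((∏ i, ev i) ^ (c⁻¹ : ℝ)) ^ c := by
        rw [Real.rpow_inv_natCast_pow hprod Fintype.card_ne_zero, hdet]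
    _ ≤ (A.trace / c) ^ c := pow_le_pow_left₀ (Real.rpow_nonneg hprod _) amgm c

end Matrix

theorem Real.mul_log_one_add_le {x a : ℝ} (hx : 0 ≤ x) (hxa : x ≤ a) :
    x * log (1 + a) ≤ a * log (1 + x) := by
  rcases (hx.trans hxa).eq_or_lt with rfl | ha
  · simp [le_antisymm hxa hx]
  have hconc := strictConcaveOn_log_Ioi.concaveOn.2 (Set.mem_Ioi.mpr one_pos)
    (Set.mem_Ioi.mpr (by linarith : (0 : ℝ) < 1 + a))
    (sub_nonneg.mpr ((div_le_one ha).mpr hxa)) (div_nonneg hx ha.le) (sub_add_cancel 1 (x / a))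
  have hpt : (1 - x / a) • (1 : ℝ) + (x / a) • (1 + a) = 1 + x := by
    simp only [smul_eq_mul]
    field_simp
    ring
  rw [hpt, smul_eq_mul, smul_eq_mul, log_one, mul_zero, zero_add] at hconc
  calc x * log (1 + a) = a * (x / a * log (1 + a)) := by field_simp
    _ ≤ a * log (1 + x) := mul_le_mul_of_nonneg_left hconc ha.le

/-- The ridge-regression Gram matrices `M t = I + ∑_{u ≤ t} W u W uᵀ` for `t ≤ T`. -/
structure IsRidgeGram {ι : Type*} [DecidableEq ι] (W : ℕ → ι → ℝ) (M : ℕ → Matrix ι ι ℝ)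
    (T : ℕ) : Prop where
  zero : M 0 = 1
  succ : ∀ t, 1 ≤ t → t ≤ T → M t = M (t - 1) + vecMulVec (W t) (W t)

namespace IsRidgeGram

variable {ι : Type*} [DecidableEq ι] {W : ℕ → ι → ℝ} {M : ℕ → Matrix ι ι ℝ} {T : ℕ}

theorem eq_one_add_sum (h : IsRidgeGram W M T) {t : ℕ} (ht : t ≤ T) :
    M t = 1 + ∑ u ∈ Finset.Icc 1 t, vecMulVec (W u) (W u) := by
  induction t with
  | zero => simp [h.zero]
  | succ t ih =>
    rw [h.succ (t + 1) (by omega) ht, Nat.add_sub_cancel, ih (by omega),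
      Finset.sum_Icc_succ_top (by omega), add_assoc]

variable [Fintype ι]

theorem one_le (h : IsRidgeGram W M T) {t : ℕ} (ht : t ≤ T) : 1 ≤ M t := by
  rw [le_iff, h.eq_one_add_sum ht, add_sub_cancel_left]
  exact posSemidef_sum _ fun u _ => posSemidef_vecMulVec_self (W u)

theorem posDef (h : IsRidgeGram W M T) {t : ℕ} (ht : t ≤ T) : (M t).PosDef :=
  posDef_of_one_le (h.one_le ht)

theorem det_eq_prod (h : IsRidgeGram W M T) {t : ℕ} (ht : t ≤ T) :
    (M t).det = ∏ u ∈ Finset.Icc 1 t, (1 + W u ⬝ᵥ ((M (u - 1))⁻¹ *ᵥ W u)) := by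
  induction t with
  | zero => simp [h.zero]
  | succ t ih =>
    rw [h.succ (t + 1) (by omega) ht, Nat.add_sub_cancel,
      det_add_vecMulVec (h.posDef (by omega)).det_pos.ne'.isUnit, ih (by omega),
      Finset.prod_Icc_succ_top (by omega), Nat.add_sub_cancel]

theorem trace_le (h : IsRidgeGram W M T) {L : ℝ} (hW : ∀ t, 1 ≤ t → t ≤ T → W t ⬝ᵥ W t ≤ L) :
    (M T).trace ≤ Fintype.card ι + T * L := by
  rw [h.eq_one_add_sum le_rfl, trace_add, trace_one, trace_sum]
  simp_rw [trace_vecMulVec]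
  gcongr
  calc ∑ t ∈ Finset.Icc 1 T, W t ⬝ᵥ W t ≤ ∑ t ∈ Finset.Icc 1 T, L :=
        Finset.sum_le_sum fun t ht => hW t (Finset.mem_Icc.mp ht).1 (Finset.mem_Icc.mp ht).2
    _ = T * L := by simp

theorem sum_log_one_add_le (h : IsRidgeGram W M T) {L : ℝ}
    (hW : ∀ t, 1 ≤ t → t ≤ T → W t ⬝ᵥ W t ≤ L) :
    ∑ t ∈ Finset.Icc 1 T, Real.log (1 + W t ⬝ᵥ ((M (t - 1))⁻¹ *ᵥ W t)) ≤
      Fintype.card ι * Real.log ((Fintype.card ι + T * L) / Fintype.card ι) := by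
  have hpos := h.posDef le_rfl
  have hfac : ∀ t ∈ Finset.Icc 1 T, 1 + W t ⬝ᵥ ((M (t - 1))⁻¹ *ᵥ W t) ≠ 0 := by
    intro t ht
    have := (h.posDef (t := t - 1) (by grind)).dotProduct_inv_mulVec_nonneg (W t)
    positivity
  rw [← Real.log_prod hfac, ← h.det_eq_prod le_rfl, ← Real.log_pow]
  refine Real.log_le_log hpos.det_pos (hpos.posSemidef.det_le_trace_div_card_pow.trans ?_)
  gcongr
  · exact div_nonneg hpos.posSemidef.trace_nonneg (Nat.cast_nonneg _)
  · exact h.trace_le hW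

end IsRidgeGram

theorem elliptical_potential_bound_general
    (p n T : ℕ) (hp : 0 < p) (hpn : p ≤ n)
    (W : ℕ → Fin p → ℝ)
    (hW : ∀ t, 1 ≤ t → t ≤ T → ∑ i : Fin p, (W t i) ^ 2 ≤ (p : ℝ))
    (M : ℕ → Matrix (Fin p) (Fin p) ℝ)
    (hM0 : M 0 = 1)
    (hMrec : ∀ t, 1 ≤ t → t ≤ T → M t = M (t - 1) + Matrix.vecMulVec (W t) (W t)) :
    (∀ t ≤ T, (M t).PosDef) ∧
    ∑ t ∈ Finset.Icc 1 T, W t ⬝ᵥ ((M (t - 1))⁻¹ *ᵥ W t) ≤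
      ((n : ℝ) * p / Real.log ((n : ℝ) + 1)) * Real.log (1 + (T : ℝ)) := by
  have hM : IsRidgeGram W M T := ⟨hM0, hMrec⟩
  have hW' : ∀ t, 1 ≤ t → t ≤ T → W t ⬝ᵥ W t ≤ p := fun t h1 h2 => by
    simpa [dotProduct, sq] using hW t h1 h2
  refine ⟨fun t ht => hM.posDef ht, ?_⟩
  set s := fun t => W t ⬝ᵥ ((M (t - 1))⁻¹ *ᵥ W t)
  have hs : ∀ t ∈ Finset.Icc 1 T, 0 ≤ s t ∧ s t ≤ n := fun t ht => by
    obtain ⟨h1, h2⟩ := Finset.mem_Icc.mp ht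
    refine ⟨(hM.posDef (by omega)).dotProduct_inv_mulVec_nonneg (W t), ?_⟩
    calc s t ≤ W t ⬝ᵥ W t := dotProduct_inv_mulVec_le_of_one_le (hM.one_le (by omega)) (W t)
      _ ≤ p := hW' t h1 h2
      _ ≤ n := by exact_mod_cast hpn
  have hsum := hM.sum_log_one_add_le hW'
  rw [Fintype.card_fin, show ((p : ℝ) + T * p) / p = 1 + T by field_simp] at hsum
  rw [div_mul_eq_mul_div, le_div_iff₀ (Real.log_pos (by norm_cast; omega)), Finset.sum_mul]
  calc ∑ t ∈ Finset.Icc 1 T, s t * Real.log (n + 1)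
      ≤ ∑ t ∈ Finset.Icc 1 T, n * Real.log (1 + s t) := Finset.sum_le_sum fun t ht => by
        simpa [add_comm] using Real.mul_log_one_add_le (hs t ht).1 (hs t ht).2
    _ ≤ n * p * Real.log (1 + T) := by
      rw [← Finset.mul_sum, mul_assoc]
      gcongr

/-- Elliptical potential bound from the regret analysis of BLM-LR-Unknown-SG:
with `M₀ = I` and `M_t = M_{t-1} + W_t W_tᵀ` for vectors with `‖W_t‖² ≤ p`,
every `M_t` is (symmetric) positive definite and
`∑_{t=1}^T W_tᵀ M_{t-1}⁻¹ W_t ≤ (n·p/log(n+1))·log(1+T)`. -/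
theorem elliptical_potential_bound
    (p n T : ℕ) (hp : 0 < p) (hpn : p ≤ n) (hT : 0 < T)
    (W : ℕ → Fin p → ℝ)
    (hW : ∀ t, 1 ≤ t → t ≤ T → ∑ i : Fin p, (W t i) ^ 2 ≤ (p : ℝ))
    (M : ℕ → Matrix (Fin p) (Fin p) ℝ)
    (hM0 : M 0 = 1)
    (hMrec : ∀ t, 1 ≤ t → t ≤ T → M t = M (t - 1) + Matrix.vecMulVec (W t) (W t)) :
    (∀ t ≤ T, (M t).PosDef) ∧
    ∑ t ∈ Finset.Icc 1 T, W t ⬝ᵥ ((M (t - 1))⁻¹ *ᵥ W t) ≤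
      ((n : ℝ) * p / Real.log ((n : ℝ) + 1)) * Real.log (1 + (T : ℝ)) :=
  elliptical_potential_bound_general p n T hp hpn W hW M hM0 hMrec
end

section
/- Let A be a finite set with at least two elements, and let μ, μ̂, β : A → ℝ with β(a) ≥ 0 and |μ̂(a) − μ(a)| ≤ β(a) for every a ∈ A. Let ε > 0. Fix a* ∈ A with μ(a*) = max_{a∈A} μ(a), and define the gaps Δ(a*) = μ(a*) − max_{a ≠ a*} μ(a) and Δ(a) = μ(a*) − μ(a) for a ≠ a*. Let a_h be a maximizer of μ̂ over A and let a_l be a maximizer of a ↦ μ̂(a) + β(a) over A ∖ {a_h}. If β(a_h) ≤ max{Δ(a_h), ε/2}/4 and β(a_l) ≤ max{Δ(a_l), ε/2}/4, then μ̂(a_l) + β(a_l) ≤ μ̂(a_h) − β(a_h) + ε. -/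
/-!
If the empirical leader `a_h` is the optimal arm, either both gaps are below `ε/2`, so both radii
are at most `ε/8`, or the gap of `a_l` dominates and the two confidence intervals are separated up to
`ε`. Otherwise `a*` competes in the choice of `a_l`, so the upper confidence bound of `a_l` is at least
`μ(a*)`; this bounds every gap in play by a sum of two radii, each at most a quarter of
`max{Δ, ε/2}`, which forces the gaps, hence the radii, to be small.
-/

lemma add_le_of_gap_le_add {d b c ε : ℝ} (hε : 0 ≤ ε) (hd : d ≤ b + c)
    (hb : b ≤ max d (ε / 2) / 4) (hc : c ≤ max d (ε / 2) / 4) : b + c ≤ ε / 4 := by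
  have hsmall : d ≤ ε / 2 := by
    by_contra! hlarge
    rw [max_eq_left hlarge.le] at hb hc
    linarith
  rw [max_eq_right hsmall] at hb hc
  linarith

lemma sub_le_add_of_le_ucb {s xl bl xa ma ba : ℝ} (hs : s ≤ xl + bl) (hlead : xl ≤ xa)
    (hconf : |xa - ma| ≤ ba) : s - ma ≤ ba + bl := by
  linarith [(abs_sub_le_iff.mp hconf).1]

lemma lucb_stop_of_radius_le_gap {xh xl mh ml bh bl d ε : ℝ} (hε : 0 ≤ ε)
    (hconfh : |xh - mh| ≤ bh) (hconfl : |xl - ml| ≤ bl) (hlead : xl ≤ xh) (hd : d = mh - ml)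
    (hbh : bh ≤ max d (ε / 2) / 4) (hbl : bl ≤ max d (ε / 2) / 4) :
    xl + bl ≤ xh - bh + ε := by
  rcases le_total d (ε / 2) with hsmall | hlarge
  · rw [max_eq_right hsmall] at hbh hbl
    linarith
  · rw [max_eq_left hlarge] at hbh hbl
    linarith [(abs_sub_le_iff.mp hconfh).2, (abs_sub_le_iff.mp hconfl).1]

/-- LUCB stopping lemma (Lemma 6 of Xiong–Chen) used in the analysis of
Causal-PE-unknown: if the confidence radii of the two arms selected by the
LUCB rule are at most a quarter of `max{Δ_a, ε/2}`, then the stopping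
condition holds. -/
theorem lucb_stopping_lemma
    {α : Type*} [DecidableEq α] (A : Finset α) (hA : 2 ≤ A.card)
    (μ μh β : α → ℝ)
    (hconf : ∀ a ∈ A, |μh a - μ a| ≤ β a)
    (ε : ℝ) (hε : 0 < ε)
    (astar : α) (hastar : astar ∈ A)
    (Δ : α → ℝ)
    (hΔstar : Δ astar = μ astar -
      (A.erase astar).sup'
        (Finset.card_pos.mp (by rw [Finset.card_erase_of_mem hastar]; omega)) μ)
    (hΔ : ∀ a ∈ A, a ≠ astar → Δ a = μ astar - μ a)
    (ah : α) (hah : ah ∈ A) (hahmax : ∀ a ∈ A, μh a ≤ μh ah)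
    (al : α) (hal : al ∈ A.erase ah)
    (halmax : ∀ a ∈ A.erase ah, μh a + β a ≤ μh al + β al)
    (hbh : β ah ≤ max (Δ ah) (ε / 2) / 4)
    (hbl : β al ≤ max (Δ al) (ε / 2) / 4) :
    μh al + β al ≤ μh ah - β ah + ε := by
  obtain ⟨hlh, halA⟩ := Finset.mem_erase.mp hal
  have hlead : μh al ≤ μh ah := hahmax al halA
  have hΔstar_le : ∀ a ∈ A, a ≠ astar → Δ astar ≤ Δ a := fun a ha hne => by
    rw [hΔstar, hΔ a ha hne]
    linarith [Finset.le_sup' μ (Finset.mem_erase.mpr ⟨hne, ha⟩)]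
  by_cases hh : ah = astar
  · subst hh
    have hbh' : β ah ≤ max (Δ al) (ε / 2) / 4 :=
      hbh.trans (by gcongr; exact hΔstar_le al halA hlh)
    exact lucb_stop_of_radius_le_gap hε.le (hconf ah hah) (hconf al halA) hlead
      (hΔ al halA hlh) hbh' hbl
  have hucb : μ astar ≤ μh al + β al := by
    have := halmax astar (Finset.mem_erase.mpr ⟨Ne.symm hh, hastar⟩)
    linarith [(abs_sub_le_iff.mp (hconf astar hastar)).2]
  have hbl' : β al ≤ max (Δ ah) (ε / 2) / 4 := by
    by_cases hl : al = astar
    · subst hl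
      exact hbl.trans (by gcongr; exact hΔstar_le ah hah hh)
    · have hgap := sub_le_add_of_le_ucb hucb le_rfl (hconf al halA)
      rw [← hΔ al halA hl] at hgap
      have := add_le_of_gap_le_add hε.le hgap hbl hbl
      linarith [le_max_right (Δ ah) (ε / 2)]
  have hgap := sub_le_add_of_le_ucb hucb hlead (hconf ah hah)
  rw [← hΔ ah hah hh] at hgap
  linarith [add_le_of_gap_le_add hε.le hgap hbh hbl']
end

section
/- Let A be a finite set with at least two elements, and let μ, μ̂, β : A → ℝ with |μ̂(a) − μ(a)| ≤ β(a) for every a ∈ A. Let ε ≥ 0, let a_h be a maximizer of μ̂ over A, and let a_l be a maximizer of a ↦ μ̂(a) + β(a) over A ∖ {a_h}. If μ̂(a_l) + β(a_l) ≤ μ̂(a_h) − β(a_h) + ε, then μ(a_h) ≥ max_{a∈A} μ(a) − ε; that is, a_h is an ε-optimal arm. -/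
/-! The true mean of every arm other than `a_h` lies below its upper confidence bound, which the
stopping rule places below the lower confidence bound of `a_h` plus `ε`, itself below `μ(a_h) + ε`;
for `a_h` itself the claim is `ε ≥ 0`. -/

theorem eps_optimal_of_ucb_le_lcb_add {α : Type*} [DecidableEq α] (A : Finset α)
    (μ μh β : α → ℝ) (hconf : ∀ a ∈ A, |μh a - μ a| ≤ β a) (ε : ℝ) (hε : 0 ≤ ε)
    (ah : α) (hah : ah ∈ A)
    (hucb : ∀ a ∈ A.erase ah, μh a + β a ≤ μh ah - β ah + ε) :
    ∀ a ∈ A, μ a - ε ≤ μ ah := by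
  intro a ha
  obtain ⟨hlcb_ah, -⟩ := abs_sub_le_iff.mp (hconf ah hah)
  by_cases hne : a = ah
  · subst hne
    linarith
  · obtain ⟨-, hucb_a⟩ := abs_sub_le_iff.mp (hconf a ha)
    linarith [hucb a (Finset.mem_erase.mpr ⟨hne, ha⟩)]

theorem lucb_output_eps_optimal_general
    {α : Type*} [DecidableEq α] (A : Finset α)
    (μ μh β : α → ℝ)
    (hconf : ∀ a ∈ A, |μh a - μ a| ≤ β a)
    (ε : ℝ) (hε : 0 ≤ ε)
    (ah : α) (hah : ah ∈ A)
    (al : α)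
    (halmax : ∀ a ∈ A.erase ah, μh a + β a ≤ μh al + β al)
    (hstop : μh al + β al ≤ μh ah - β ah + ε) :
    ∀ a ∈ A, μ a - ε ≤ μ ah :=
  eps_optimal_of_ucb_le_lcb_add A μ μh β hconf ε hε ah hah fun a ha => (halmax a ha).trans hstop

/-- Correctness of the LUCB output in Causal-PE-unknown: when the stopping
condition triggers, the empirically best arm `a_h` is ε-optimal. -/
theorem lucb_output_eps_optimal
    {α : Type*} [DecidableEq α] (A : Finset α) (hA : 2 ≤ A.card)
    (μ μh β : α → ℝ)
    (hconf : ∀ a ∈ A, |μh a - μ a| ≤ β a)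
    (ε : ℝ) (hε : 0 ≤ ε)
    (ah : α) (hah : ah ∈ A) (hahmax : ∀ a ∈ A, μh a ≤ μh ah)
    (al : α) (hal : al ∈ A.erase ah)
    (halmax : ∀ a ∈ A.erase ah, μh a + β a ≤ μh al + β al)
    (hstop : μh al + β al ≤ μh ah - β ah + ε) :
    ∀ a ∈ A, μ a - ε ≤ μ ah :=
  lucb_output_eps_optimal_general A μ μh β hconf ε hε ah hah al halmax hstop
end

section
/- Fix an integer n ≥ 1, a weight matrix θ, a set S ⊆ {0,…,n−1} of intervened nodes, a set K ⊆ {0,…,n−1}² of kept edges, and a real r ≥ 0 such that θ(j,i) ≤ r whenever (j,i) ∉ K. Define the weight matrix θ″ by θ″(j,i) = θ(j,i) if (j,i) ∈ K and θ″(j,i) = 0 otherwise. Then for every node i ∈ {0,…,n−1}, |μ[θ,S](i) − μ[θ″,S](i)| ≤ (i+1)·n·r; in particular this difference is at most n²·r. -/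
/-!
Both mean vectors take values in `[0, 1]`, and the mean at node `i` is a weighted average of
earlier means. Splitting `m i - m'' i` as `∑ (θ - θ'') m + ∑ θ'' (m - m'')`, the first sum is at
most `∑_{j<i} |θ j i - θ'' j i| ≤ n r` because `|m| ≤ 1`, and the second is at most the largest
earlier error because the weights `θ''` have column sums at most `1`. Induction on `i` adds at most
`n r` per node.
-/

open Finset

lemma sum_range_le_one_of_lt {n i : ℕ} {θ : ℕ → ℕ → ℝ} (hθ0 : ∀ j i, 0 ≤ θ j i)
    (hθsum : ∀ i, ∑ j ∈ range n, θ j i ≤ 1) (hi : i < n) :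
    ∑ j ∈ range i, θ j i ≤ 1 :=
  (sum_le_sum_of_subset_of_nonneg (range_subset_range.mpr hi.le)
    fun j _ _ ↦ hθ0 j i).trans (hθsum i)

/-- `m` is the interventional mean vector `μ[θ,S]`, node `0` being the always-one node. -/
def IsInterventionalMean (θ : ℕ → ℕ → ℝ) (S : Finset ℕ) (m : ℕ → ℝ) : Prop :=
  ∀ i, m i = if i = 0 ∨ i ∈ S then 1 else ∑ j ∈ range i, θ j i * m j

namespace IsInterventionalMean

variable {n : ℕ} {θ θ' : ℕ → ℕ → ℝ} {S : Finset ℕ} {m m' : ℕ → ℝ}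

lemma mem_Icc (hm : IsInterventionalMean θ S m) (hθ0 : ∀ j i, 0 ≤ θ j i)
    (hθsum : ∀ i, ∑ j ∈ range n, θ j i ≤ 1) : ∀ i < n, m i ∈ Set.Icc 0 1 := by
  intro i
  induction i using Nat.strong_induction_on with
  | _ i ih =>
  intro hi
  have ih' : ∀ j ∈ range i, m j ∈ Set.Icc 0 1 := fun j hj ↦
    ih j (mem_range.mp hj) ((mem_range.mp hj).trans hi)
  rw [hm i]
  split_ifs
  · simp
  refine ⟨sum_nonneg fun j hj ↦ mul_nonneg (hθ0 j i) (ih' j hj).1, ?_⟩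
  calc ∑ j ∈ range i, θ j i * m j ≤ ∑ j ∈ range i, θ j i :=
        sum_le_sum fun j hj ↦ mul_le_of_le_one_right (hθ0 j i) (ih' j hj).2
    _ ≤ 1 := sum_range_le_one_of_lt hθ0 hθsum hi

lemma abs_sub_le (hm : IsInterventionalMean θ S m) (hm' : IsInterventionalMean θ' S m')
    (hm1 : ∀ j < n, |m j| ≤ 1) (hθ'0 : ∀ j i, 0 ≤ θ' j i)
    (hθ'sum : ∀ i, ∑ j ∈ range n, θ' j i ≤ 1) {δ : ℝ}
    (hδ : ∀ i < n, ∑ j ∈ range i, |θ j i - θ' j i| ≤ δ) :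
    ∀ i < n, |m i - m' i| ≤ (i + 1) * δ := by
  intro i
  induction i using Nat.strong_induction_on with
  | _ i ih =>
  intro hi
  have hδ0 : 0 ≤ δ := by simpa using hδ 0 (by omega)
  rw [hm i, hm' i]
  split_ifs
  · simp only [sub_self, abs_zero]
    positivity
  have hsplit : ∑ j ∈ range i, θ j i * m j - ∑ j ∈ range i, θ' j i * m' j
      = ∑ j ∈ range i, (θ j i - θ' j i) * m j + ∑ j ∈ range i, θ' j i * (m j - m' j) := by
    rw [← sum_add_distrib, ← sum_sub_distrib]
    exact sum_congr rfl fun j _ ↦ by ring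
  have hweights : |∑ j ∈ range i, (θ j i - θ' j i) * m j| ≤ δ :=
    calc |∑ j ∈ range i, (θ j i - θ' j i) * m j|
        ≤ ∑ j ∈ range i, |θ j i - θ' j i| * |m j| :=
          (abs_sum_le_sum_abs _ _).trans_eq (sum_congr rfl fun j _ ↦ abs_mul _ _)
      _ ≤ ∑ j ∈ range i, |θ j i - θ' j i| :=
          sum_le_sum fun j hj ↦ mul_le_of_le_one_right (abs_nonneg _)
            (hm1 j ((mem_range.mp hj).trans hi))
      _ ≤ δ := hδ i hi
  have herrors : |∑ j ∈ range i, θ' j i * (m j - m' j)| ≤ i * δ :=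
    calc |∑ j ∈ range i, θ' j i * (m j - m' j)|
        ≤ ∑ j ∈ range i, θ' j i * |m j - m' j| :=
          (abs_sum_le_sum_abs _ _).trans_eq (sum_congr rfl fun j _ ↦ by
            rw [abs_mul, abs_of_nonneg (hθ'0 j i)])
      _ ≤ ∑ j ∈ range i, θ' j i * (i * δ) := by
          refine sum_le_sum fun j hj ↦ mul_le_mul_of_nonneg_left ?_ (hθ'0 j i)
          have hj := mem_range.mp hj
          have hji : (j : ℝ) + 1 ≤ i := by exact_mod_cast hj
          exact (ih j hj (hj.trans hi)).trans (mul_le_mul_of_nonneg_right hji hδ0)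
      _ = (∑ j ∈ range i, θ' j i) * (i * δ) := (sum_mul _ _ _).symm
      _ ≤ i * δ := mul_le_of_le_one_left (by positivity) (sum_range_le_one_of_lt hθ'0 hθ'sum hi)
  calc _ = |∑ j ∈ range i, (θ j i - θ' j i) * m j
          + ∑ j ∈ range i, θ' j i * (m j - m' j)| := by rw [hsplit]
    _ ≤ δ + i * δ := (abs_add_le _ _).trans (add_le_add hweights herrors)
    _ = (i + 1) * δ := by ring

end IsInterventionalMean

lemma sum_range_abs_sub_ite_mem_le {n i : ℕ} {θ : ℕ → ℕ → ℝ} {K : Finset (ℕ × ℕ)} {r : ℝ}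
    (hθ0 : ∀ j i, 0 ≤ θ j i) (hr : 0 ≤ r)
    (hsmall : ∀ j i, j < n → i < n → (j, i) ∉ K → θ j i ≤ r) (hi : i < n) :
    ∑ j ∈ range i, |θ j i - if (j, i) ∈ K then θ j i else 0| ≤ n * r := by
  have hdeleted : ∀ j < i, |θ j i - if (j, i) ∈ K then θ j i else 0| ≤ r := fun j hj ↦ by
    split_ifs with hK
    · simpa using hr
    · simpa [abs_of_nonneg (hθ0 j i)] using hsmall j i (hj.trans hi) hi hK
  calc _ ≤ ∑ _j ∈ range i, r := sum_le_sum fun j hj ↦ hdeleted j (mem_range.mp hj)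
    _ = i * r := by simp
    _ ≤ n * r := mul_le_mul_of_nonneg_right (by exact_mod_cast hi.le) hr

theorem blm_delete_small_edges_close_general
    (n : ℕ)
    (θ : ℕ → ℕ → ℝ)
    (hθ0 : ∀ j i, 0 ≤ θ j i)
    (hθsum : ∀ i, ∑ j ∈ Finset.range n, θ j i ≤ 1)
    (S : Finset ℕ)
    (K : Finset (ℕ × ℕ))
    (r : ℝ) (hr : 0 ≤ r)
    (hsmall : ∀ j i, j < n → i < n → (j, i) ∉ K → θ j i ≤ r)
    (θ'' : ℕ → ℕ → ℝ)
    (hθ'' : ∀ j i, θ'' j i = if (j, i) ∈ K then θ j i else 0)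
    (m m'' : ℕ → ℝ)
    (hm : ∀ i, m i = if i = 0 ∨ i ∈ S then 1
      else ∑ j ∈ Finset.range i, θ j i * m j)
    (hm'' : ∀ i, m'' i = if i = 0 ∨ i ∈ S then 1
      else ∑ j ∈ Finset.range i, θ'' j i * m'' j) :
    ∀ i < n, |m i - m'' i| ≤ ((i : ℝ) + 1) * n * r ∧
      |m i - m'' i| ≤ (n : ℝ) ^ 2 * r := by
  obtain rfl : θ'' = fun j i ↦ if (j, i) ∈ K then θ j i else 0 := funext fun j ↦ funext (hθ'' j)
  have hθ''0 : ∀ j i, 0 ≤ if (j, i) ∈ K then θ j i else 0 := fun j i ↦ by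
    split_ifs <;> simp [hθ0]
  have hθ''sum : ∀ i, ∑ j ∈ range n, (if (j, i) ∈ K then θ j i else 0) ≤ 1 := fun i ↦
    (sum_le_sum fun j _ ↦ by split_ifs <;> simp [hθ0]).trans (hθsum i)
  have hm1 : ∀ j < n, |m j| ≤ 1 := fun j hj ↦
    have h := IsInterventionalMean.mem_Icc hm hθ0 hθsum j hj
    abs_le.mpr ⟨by linarith [h.1], h.2⟩
  intro i hi
  have hclose := IsInterventionalMean.abs_sub_le hm hm'' hm1 hθ''0 hθ''sum
    (fun i hi ↦ sum_range_abs_sub_ite_mem_le hθ0 hr hsmall hi) i hi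
  have hin : (i : ℝ) + 1 ≤ n := by exact_mod_cast hi
  refine ⟨by linarith, hclose.trans ?_⟩
  calc ((i : ℝ) + 1) * (n * r) ≤ n * (n * r) := mul_le_mul_of_nonneg_right hin (by positivity)
    _ = (n : ℝ) ^ 2 * r := by ring

/-- Claim 1 in the proof of Lemma 7: deleting the low-weight edges (those
outside the kept set `K`, each of weight at most `r`) from a noiseless BLM
changes each interventional mean by at most `(i+1)·n·r ≤ n²·r`.

Here `m` (resp. `m''`) is the interventional mean vector of the model with
weight matrix `θ` (resp. `θ''`), characterized by the strong recursion
`m i = 1` if `i = 0` or `i ∈ S`, and `m i = ∑_{j<i} θ j i · m j` otherwise. -/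
theorem blm_delete_small_edges_close
    (n : ℕ) (hn : 1 ≤ n)
    (θ : ℕ → ℕ → ℝ)
    (hθ0 : ∀ j i, 0 ≤ θ j i)
    (hθtri : ∀ j i, ¬ j < i → θ j i = 0)
    (hθsum : ∀ i, ∑ j ∈ Finset.range n, θ j i ≤ 1)
    (S : Finset ℕ) (hS : ∀ s ∈ S, s < n)
    (K : Finset (ℕ × ℕ)) (hK : ∀ e ∈ K, e.1 < n ∧ e.2 < n)
    (r : ℝ) (hr : 0 ≤ r)
    (hsmall : ∀ j i, j < n → i < n → (j, i) ∉ K → θ j i ≤ r)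
    (θ'' : ℕ → ℕ → ℝ)
    (hθ'' : ∀ j i, θ'' j i = if (j, i) ∈ K then θ j i else 0)
    (m m'' : ℕ → ℝ)
    (hm : ∀ i, m i = if i = 0 ∨ i ∈ S then 1
      else ∑ j ∈ Finset.range i, θ j i * m j)
    (hm'' : ∀ i, m'' i = if i = 0 ∨ i ∈ S then 1
      else ∑ j ∈ Finset.range i, θ'' j i * m'' j) :
    ∀ i < n, |m i - m'' i| ≤ ((i : ℝ) + 1) * n * r ∧
      |m i - m'' i| ≤ (n : ℝ) ^ 2 * r :=
  blm_delete_small_edges_close_general n θ hθ0 hθsum S K r hr hsmall θ'' hθ'' m m'' hm hm''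
end
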